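/- Symmetrization inequality: let X₁,…,X_n be i.i.d. random elements of X, F a countable family of bounded measurable functions h : X → ℝ, and define the expected supremum deviation D = E[ sup_{h∈F} ( E[h(X₁)] − (1/n)∑ᵢ h(Xᵢ) ) ]. Then D ≤ 2 E[ sup_{h∈F} (1/n) ∑ᵢ σᵢ h(Xᵢ) ], where σᵢ are i.i.d. Rademacher signs independent of the Xᵢ. -/
import Mathlib
open MeasureTheory

private lemma integrable_of_bdd' {α : Type*} [MeasurableSpace α] {P : Measure α}
    [IsFiniteMeasure P] {f : α → ℝ} {B : ℝ} (hf : AEStronglyMeasurable f P)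
    (hB : ∀ a, |f a| ≤ B) : Integrable f P :=
  (integrable_const B).mono' hf
    (Filter.Eventually.of_forall fun a => by simpa [Real.norm_eq_abs] using hB a)

private lemma abs_ciSup_le' {g : ℕ → ℝ} {B : ℝ} (h : ∀ k, |g k| ≤ B) : |⨆ k, g k| ≤ B := by
  have hub : ∀ k, g k ≤ B := fun k => (abs_le.1 (h k)).2
  have hbdd : BddAbove (Set.range g) := ⟨B, by rintro _ ⟨k, rfl⟩; exact hub k⟩
  refine abs_le.2 ⟨?_, ciSup_le hub⟩
  exact le_trans (abs_le.1 (h 0)).1 (le_ciSup hbdd 0)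

private lemma avg_abs_le' {n : ℕ} (hn : 0 < n) {g : Fin n → ℝ} {B : ℝ} (hg : ∀ i, |g i| ≤ B) :
    |(1 / n : ℝ) * ∑ i, g i| ≤ B := by
  have hn' : (0:ℝ) < n := by exact_mod_cast hn
  have h1 : |∑ i, g i| ≤ (n : ℝ) * B :=
    calc |∑ i, g i| ≤ ∑ i, |g i| := Finset.abs_sum_le_sum_abs _ _
    _ ≤ ∑ _i : Fin n, B := Finset.sum_le_sum fun i _ => hg i
    _ = (n:ℝ) * B := by simp [Finset.sum_const, Finset.card_univ, nsmul_eq_mul]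
  rw [abs_mul, abs_of_nonneg (by positivity : (0:ℝ) ≤ 1 / (n:ℝ))]
  calc (1/(n:ℝ)) * |∑ i, g i| ≤ (1/(n:ℝ)) * ((n:ℝ)*B) :=
        mul_le_mul_of_nonneg_left h1 (by positivity)
    _ = B := by field_simp

theorem symmetrization {𝒳 : Type*} [MeasurableSpace 𝒳]
    (μ : Measure 𝒳) [IsProbabilityMeasure μ]
    (n : ℕ) (hn : 0 < n) (F : ℕ → 𝒳 → ℝ) (C : ℝ)
    (hmeas : ∀ k, Measurable (F k)) (hbdd : ∀ k x, |F k x| ≤ C) :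
    ∫ x : Fin n → 𝒳,
        (⨆ k, ((∫ y, F k y ∂μ) - (1 / n : ℝ) * ∑ i, F k (x i)))
        ∂(Measure.pi fun _ => μ)
      ≤ 2 * ((1 / 2 ^ n : ℝ) * ∑ ε : Fin n → Bool,
          ∫ x : Fin n → 𝒳,
            (⨆ k, (1 / n : ℝ) * ∑ i, (if ε i then (1 : ℝ) else -1) * F k (x i))
            ∂(Measure.pi fun _ => μ)) := by
  classical
  set ν : Measure (Fin n → 𝒳) := Measure.pi fun _ => μ with hνdef
  set ρ : Measure (Fin n → 𝒳 × 𝒳) := Measure.pi fun _ => μ.prod μ with hρdef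
  haveI : IsProbabilityMeasure ν := by rw [hνdef]; infer_instance
  haveI : IsProbabilityMeasure ρ := by rw [hρdef]; infer_instance
  -- nonempty and C ≥ 0
  have hne : Nonempty 𝒳 := by
    by_contra h
    rw [not_nonempty_iff] at h
    have := measure_univ (μ := μ)
    rw [Set.univ_eq_empty_iff.2 h] at this
    simp at this
  have hC0 : 0 ≤ C := le_trans (abs_nonneg _) (hbdd 0 (Classical.arbitrary 𝒳))
  -- notation
  set A : ℕ → (Fin n → 𝒳) → ℝ := fun k x => (1 / n : ℝ) * ∑ i, F k (x i) with hAdef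
  set I : ℕ → ℝ := fun k => ∫ y, F k y ∂μ with hIdef
  have hAabs : ∀ k x, |A k x| ≤ C := fun k x => avg_abs_le' hn fun i => hbdd k (x i)
  have hIabs : ∀ k, |I k| ≤ C := by
    intro k
    have := norm_integral_le_of_norm_le_const (μ := μ) (f := F k) (C := C)
      (Filter.Eventually.of_forall fun y => by simpa [Real.norm_eq_abs] using hbdd k y)
    simpa [Real.norm_eq_abs, hIdef] using this
  have hAmeas : ∀ k, Measurable (A k) := fun k =>
    measurable_const.mul (Finset.measurable_sum Finset.univ fun i _ =>
      (hmeas k).comp (measurable_pi_apply i))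
  -- marginal of pi measure under coordinate evaluation
  have heval : ∀ i : Fin n, ν.map (fun y => y i) = μ := by
    intro i
    refine Measure.ext fun s hs => ?_
    rw [Measure.map_apply (measurable_pi_apply i) hs]
    have hpre : (fun y : Fin n → 𝒳 => y i) ⁻¹' s
        = Set.pi Set.univ (Function.update (fun _ : Fin n => (Set.univ : Set 𝒳)) i s) := by
      ext y
      constructor
      · intro hy j _; by_cases hj : j = i <;> simp [Function.update_apply, hj, hy.out]
      · intro hy; simpa using hy i (Set.mem_univ i)
    rw [hνdef, hpre, Measure.pi_pi]
    rw [Finset.prod_eq_single i (fun j _ hj => by simp [Function.update_apply, hj])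
      (by simp)]
    simp
  have hIint : ∀ k, ∫ y, A k y ∂ν = I k := by
    intro k
    have hint : ∀ i : Fin n, Integrable (fun y : Fin n → 𝒳 => F k (y i)) ν :=
      fun i => integrable_of_bdd' (((hmeas k).comp (measurable_pi_apply i)).aestronglyMeasurable)
        (fun y => hbdd k (y i))
    have h1 : ∫ y, A k y ∂ν = (1 / n : ℝ) * ∑ i, ∫ y, F k (y i) ∂ν := by
      rw [hAdef]
      simp only []
      rw [integral_const_mul, integral_finset_sum Finset.univ fun i _ => hint i]
    have h2 : ∀ i : Fin n, ∫ y, F k (y i) ∂ν = I k := by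
      intro i
      rw [hIdef]
      simp only []
      rw [← heval i, integral_map (measurable_pi_apply i).aemeasurable
        ((hmeas k).aestronglyMeasurable)]
    rw [h1]
    simp only [h2, Finset.sum_const, Finset.card_univ, Fintype.card_fin, nsmul_eq_mul]
    have hn' : (n:ℝ) ≠ 0 := by positivity
    field_simp
  -- the double-sample sup function
  set H : (Fin n → 𝒳) → (Fin n → 𝒳) → ℝ := fun x y => ⨆ k, (A k y - A k x) with hHdef
  have hHabs : ∀ x y, |H x y| ≤ 2 * C := fun x y =>
    abs_ciSup_le' fun k => by
      have := abs_sub (A k y) (A k x)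
      calc |A k y - A k x| ≤ |A k y| + |A k x| := abs_sub _ _
        _ ≤ C + C := add_le_add (hAabs k y) (hAabs k x)
        _ = 2 * C := by ring
  have hHmeas : Measurable (fun p : (Fin n → 𝒳) × (Fin n → 𝒳) => H p.1 p.2) :=
    Measurable.iSup fun k => ((hAmeas k).comp measurable_snd).sub ((hAmeas k).comp measurable_fst)
  -- Step 2 : pointwise Jensen (sup of integrals ≤ integral of sup)
  have hBddH : ∀ x y, BddAbove (Set.range fun k => A k y - A k x) := by
    intro x y
    refine ⟨2 * C, ?_⟩
    rintro _ ⟨k, rfl⟩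
    have h1 := (abs_le.1 (hAabs k y)).2
    have h2 := (abs_le.1 (hAabs k x)).1
    simp only []
    linarith
  have hstep2 : ∀ x, (⨆ k, (I k - A k x)) ≤ ∫ y, H x y ∂ν := by
    intro x
    refine ciSup_le fun k => ?_
    have hconst : ∫ _y : Fin n → 𝒳, A k x ∂ν = A k x := by simp
    have hrep : I k - A k x = ∫ y, (A k y - A k x) ∂ν := by
      rw [integral_sub (integrable_of_bdd' (hAmeas k).aestronglyMeasurable (hAabs k))
        (integrable_const _), hconst, hIint k]
    rw [hrep]
    refine integral_mono
      (integrable_of_bdd' (B := C + C) (((hAmeas k).sub measurable_const).aestronglyMeasurable)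
        (fun y => ?_))
      (integrable_of_bdd' ((hHmeas.comp (measurable_prodMk_left (x := x))).aestronglyMeasurable)
        (fun y => hHabs x y))
      (fun y => le_ciSup (hBddH x y) k)
    calc |A k y - A k x| ≤ |A k y| + |A k x| := abs_sub _ _
      _ ≤ C + C := add_le_add (hAabs k y) (hAabs k x)
  -- integrate over x and pass to the product measure
  have hSupMeas : Measurable (fun x => ⨆ k, (I k - A k x)) :=
    Measurable.iSup fun k => measurable_const.sub (hAmeas k)
  have hInner : Integrable (fun x => ∫ y, H x y ∂ν) ν := by
    refine integrable_of_bdd' (B := 2 * C) ?_ ?_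
    · exact (hHmeas.stronglyMeasurable.integral_prod_right').aestronglyMeasurable
    · intro x
      have := norm_integral_le_of_norm_le_const (μ := ν) (f := fun y => H x y) (C := 2 * C)
        (Filter.Eventually.of_forall fun y => by simpa [Real.norm_eq_abs] using hHabs x y)
      simpa [Real.norm_eq_abs] using this
  have main1 : ∫ x, (⨆ k, (I k - A k x)) ∂ν ≤ ∫ x, (∫ y, H x y ∂ν) ∂ν := by
    refine integral_mono (integrable_of_bdd' (B := 2 * C) hSupMeas.aestronglyMeasurable
      (fun x => abs_ciSup_le' fun k => ?_)) hInner hstep2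
    have h1 := abs_le.1 (hIabs k)
    have h2 := abs_le.1 (hAabs k x)
    rw [abs_le]; constructor <;> [linarith [h1.1, h2.2]; linarith [h1.2, h2.1]]
  have hHprodInt : Integrable (fun p : (Fin n → 𝒳) × (Fin n → 𝒳) => H p.1 p.2) (ν.prod ν) :=
    integrable_of_bdd' (B := 2 * C) hHmeas.aestronglyMeasurable (fun p => hHabs p.1 p.2)
  have main2 : ∫ x, (∫ y, H x y ∂ν) ∂ν = ∫ p, H p.1 p.2 ∂(ν.prod ν) :=
    integral_integral hHprodInt
  set Dfun : (Fin n → 𝒳 × 𝒳) → ℝ :=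
    fun z => ⨆ k, (1 / n : ℝ) * ∑ i, (F k (z i).2 - F k (z i).1) with hDdef
  have hφ : MeasurePreserving (MeasurableEquiv.arrowProdEquivProdArrow 𝒳 𝒳 (Fin n)) ρ
      (ν.prod ν) := measurePreserving_arrowProdEquivProdArrow 𝒳 𝒳 (Fin n) (fun _ => μ)
      (fun _ => μ)
  have main3 : ∫ p, H p.1 p.2 ∂(ν.prod ν) = ∫ z, Dfun z ∂ρ := by
    rw [← hφ.map_eq, integral_map hφ.measurable.aemeasurable hHmeas.aestronglyMeasurable]
    refine integral_congr_ae (Filter.Eventually.of_forall fun z => ?_)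
    show H (fun i => (z i).1) (fun i => (z i).2) = Dfun z
    refine iSup_congr fun k => ?_
    rw [Finset.sum_sub_distrib, mul_sub]
  -- Rademacher signs
  set η : (Fin n → Bool) → Fin n → ℝ := fun ε i => if ε i then 1 else -1 with hηdef
  have hηabs : ∀ ε i, |η ε i| = 1 := by
    intro ε i; rw [hηdef]; by_cases h : ε i <;> simp [h]
  set Rad : (Fin n → Bool) → ℝ := fun ε =>
    ∫ x, (⨆ k, (1 / n : ℝ) * ∑ i, η ε i * F k (x i)) ∂ν with hRdef
  have hRintmeas : ∀ (ε : Fin n → Bool), Measurable (fun x : Fin n → 𝒳 =>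
      ⨆ k, (1 / n : ℝ) * ∑ i, η ε i * F k (x i)) := fun ε =>
    Measurable.iSup fun k => measurable_const.mul (Finset.measurable_sum Finset.univ fun i _ =>
      measurable_const.mul ((hmeas k).comp (measurable_pi_apply i)))
  have hDmeas : Measurable Dfun :=
    Measurable.iSup fun k => measurable_const.mul (Finset.measurable_sum Finset.univ fun i _ =>
      ((hmeas k).comp (measurable_snd.comp (measurable_pi_apply i))).sub
      ((hmeas k).comp (measurable_fst.comp (measurable_pi_apply i))))
  have habsdiff : ∀ (ε : Fin n → Bool) (z : Fin n → 𝒳 × 𝒳) (k : ℕ) (i : Fin n),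
      |η ε i * (F k (z i).2 - F k (z i).1)| ≤ 2 * C := by
    intro ε z k i
    rw [abs_mul, hηabs, one_mul]
    calc |F k (z i).2 - F k (z i).1| ≤ |F k (z i).2| + |F k (z i).1| := abs_sub _ _
      _ ≤ C + C := add_le_add (hbdd _ _) (hbdd _ _)
      _ = 2 * C := by ring
  -- step 4 : symmetry via coordinatewise swaps
  have step4 : ∀ ε : Fin n → Bool, ∫ z, Dfun z ∂ρ
      = ∫ z, (⨆ k, (1 / n : ℝ) * ∑ i, η ε i * (F k (z i).2 - F k (z i).1)) ∂ρ := by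
    intro ε
    set f : Fin n → 𝒳 × 𝒳 → 𝒳 × 𝒳 := fun i p => if ε i then p else p.swap with hfdef
    have hmp : ∀ i : Fin n, MeasurePreserving (f i) (μ.prod μ) (μ.prod μ) := by
      intro i
      rw [hfdef]
      by_cases h : ε i
      · simp only [h, if_true]
        exact MeasurePreserving.id _
      · simp only [h, if_false]
        exact Measure.measurePreserving_swap
    have hS : MeasurePreserving (fun z : Fin n → 𝒳 × 𝒳 => fun i => f i (z i)) ρ ρ := by
      rw [hρdef]
      exact measurePreserving_pi _ _ hmp
    calc ∫ z, Dfun z ∂ρ = ∫ z, Dfun z ∂(ρ.map (fun z i => f i (z i))) := by rw [hS.map_eq]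
      _ = ∫ z, Dfun (fun i => f i (z i)) ∂ρ :=
        integral_map hS.aemeasurable hDmeas.aestronglyMeasurable
      _ = _ := by
        refine integral_congr_ae (Filter.Eventually.of_forall fun z => ?_)
        refine iSup_congr fun k => ?_
        congr 1
        refine Finset.sum_congr rfl fun i _ => ?_
        by_cases h : ε i
        · simp [hfdef, hηdef, h]
        · simp only [hfdef, hηdef, h, if_false, Prod.fst_swap, Prod.snd_swap, Bool.false_eq_true]
          ring
  -- bddAbove for sign sums
  have hsignbdd : ∀ (ε : Fin n → Bool) (v : Fin n → 𝒳),
      BddAbove (Set.range fun k => (1 / n : ℝ) * ∑ i, η ε i * F k (v i)) := by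
    intro ε v
    refine ⟨C, ?_⟩
    rintro _ ⟨k, rfl⟩
    exact (abs_le.1 (avg_abs_le' hn fun i => by
      rw [abs_mul, hηabs, one_mul]; exact hbdd k (v i))).2
  -- step 5 : pointwise splitting
  have hsplitptwise : ∀ (ε : Fin n → Bool) (z : Fin n → 𝒳 × 𝒳),
      (⨆ k, (1 / n : ℝ) * ∑ i, η ε i * (F k (z i).2 - F k (z i).1))
        ≤ (⨆ k, (1 / n : ℝ) * ∑ i, η ε i * F k (z i).2)
          + (⨆ k, (1 / n : ℝ) * ∑ i, η (fun j => !ε j) i * F k (z i).1) := by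
    intro ε z
    refine ciSup_le fun k => ?_
    have hd : (1 / n : ℝ) * ∑ i, η ε i * (F k (z i).2 - F k (z i).1)
        = (1 / n : ℝ) * ∑ i, η ε i * F k (z i).2
          + (1 / n : ℝ) * ∑ i, η (fun j => !ε j) i * F k (z i).1 := by
      rw [← mul_add, ← Finset.sum_add_distrib]
      congr 1
      refine Finset.sum_congr rfl fun i _ => ?_
      by_cases h : ε i <;> simp [hηdef, h] <;> ring
    rw [hd]
    exact add_le_add (le_ciSup (hsignbdd ε fun i => (z i).2) k)
      (le_ciSup (hsignbdd (fun j => !ε j) fun i => (z i).1) k)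
  -- projections are measure preserving
  have hmp2 : MeasurePreserving (fun z : Fin n → 𝒳 × 𝒳 => fun i => (z i).2) ρ ν := by
    rw [hρdef, hνdef]
    exact measurePreserving_pi _ _ fun i => ⟨(measurable_snd : Measurable (Prod.snd : 𝒳 × 𝒳 → 𝒳)), by simp⟩
  have hmp1 : MeasurePreserving (fun z : Fin n → 𝒳 × 𝒳 => fun i => (z i).1) ρ ν := by
    rw [hρdef, hνdef]
    exact measurePreserving_pi _ _ fun i => ⟨(measurable_fst : Measurable (Prod.fst : 𝒳 × 𝒳 → 𝒳)), by simp⟩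
  have hRad2 : ∀ ε : Fin n → Bool,
      ∫ z, (⨆ k, (1 / n : ℝ) * ∑ i, η ε i * F k (z i).2) ∂ρ = Rad ε := by
    intro ε
    rw [hRdef]
    simp only []
    rw [← hmp2.map_eq, integral_map hmp2.aemeasurable (hRintmeas ε).aestronglyMeasurable]
  have hRad1 : ∀ ε : Fin n → Bool,
      ∫ z, (⨆ k, (1 / n : ℝ) * ∑ i, η ε i * F k (z i).1) ∂ρ = Rad ε := by
    intro ε
    rw [hRdef]
    simp only []
    rw [← hmp1.map_eq, integral_map hmp1.aemeasurable (hRintmeas ε).aestronglyMeasurable]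
  -- integrabilities on ρ
  have hz1 : ∀ i : Fin n, Measurable fun z : Fin n → 𝒳 × 𝒳 => (z i).1 :=
    fun i => (measurable_pi_apply i).fst
  have hz2 : ∀ i : Fin n, Measurable fun z : Fin n → 𝒳 × 𝒳 => (z i).2 :=
    fun i => (measurable_pi_apply i).snd
  have hintdiff : ∀ ε : Fin n → Bool,
      Integrable (fun z : Fin n → 𝒳 × 𝒳 =>
        ⨆ k, (1 / n : ℝ) * ∑ i, η ε i * (F k (z i).2 - F k (z i).1)) ρ := by
    intro ε
    refine integrable_of_bdd' (B := 2 * C) ?_ ?_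
    · exact (Measurable.iSup fun k => measurable_const.mul
        (Finset.measurable_sum Finset.univ fun i _ => measurable_const.mul
          (((hmeas k).comp (hz2 i)).sub ((hmeas k).comp (hz1 i))))).aestronglyMeasurable
    · exact fun z => abs_ciSup_le' fun k => avg_abs_le' hn fun i => habsdiff ε z k i
  have hint2 : ∀ ε : Fin n → Bool,
      Integrable (fun z : Fin n → 𝒳 × 𝒳 => ⨆ k, (1 / n : ℝ) * ∑ i, η ε i * F k (z i).2) ρ := by
    intro ε
    refine integrable_of_bdd' (B := C) ?_ ?_
    · exact (Measurable.iSup fun k => measurable_const.mul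
        (Finset.measurable_sum Finset.univ fun i _ => measurable_const.mul
          ((hmeas k).comp (hz2 i)))).aestronglyMeasurable
    · exact fun z => abs_ciSup_le' fun k => avg_abs_le' hn fun i => by
        rw [abs_mul, hηabs, one_mul]; exact hbdd k _
  have hint1 : ∀ ε : Fin n → Bool,
      Integrable (fun z : Fin n → 𝒳 × 𝒳 => ⨆ k, (1 / n : ℝ) * ∑ i, η ε i * F k (z i).1) ρ := by
    intro ε
    refine integrable_of_bdd' (B := C) ?_ ?_
    · exact (Measurable.iSup fun k => measurable_const.mul
        (Finset.measurable_sum Finset.univ fun i _ => measurable_const.mul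
          ((hmeas k).comp (hz1 i)))).aestronglyMeasurable
    · exact fun z => abs_ciSup_le' fun k => avg_abs_le' hn fun i => by
        rw [abs_mul, hηabs, one_mul]; exact hbdd k _
  -- step 5 : integral form
  have step5 : ∀ ε : Fin n → Bool, ∫ z, Dfun z ∂ρ ≤ Rad ε + Rad (fun j => !ε j) := by
    intro ε
    rw [step4 ε]
    calc ∫ z, (⨆ k, (1 / n : ℝ) * ∑ i, η ε i * (F k (z i).2 - F k (z i).1)) ∂ρ
        ≤ ∫ z, ((⨆ k, (1 / n : ℝ) * ∑ i, η ε i * F k (z i).2)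
            + (⨆ k, (1 / n : ℝ) * ∑ i, η (fun j => !ε j) i * F k (z i).1)) ∂ρ :=
          integral_mono (hintdiff ε) ((hint2 ε).add (hint1 (fun j => !ε j)))
            (hsplitptwise ε)
      _ = Rad ε + Rad (fun j => !ε j) := by
          rw [integral_add (hint2 ε) (hint1 (fun j => !ε j)), hRad2 ε, hRad1 (fun j => !ε j)]
  -- averaging over all sign vectors
  set S : ℝ := ∑ ε : Fin n → Bool, Rad ε with hSdef
  have hflip : ∑ ε : Fin n → Bool, Rad (fun j => !ε j) = S := by
    rw [hSdef]
    exact Fintype.sum_equiv (Function.Involutive.toPerm (fun ε : Fin n → Bool => fun j => !ε j)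
      (fun ε => by funext j; simp)) _ _ (fun ε => rfl)
  have hDS : ∫ z, Dfun z ∂ρ ≤ 2 * ((1 / 2 ^ n : ℝ) * S) := by
    have hsum : ∑ _ε : Fin n → Bool, ∫ z, Dfun z ∂ρ
        ≤ ∑ ε : Fin n → Bool, (Rad ε + Rad (fun j => !ε j)) :=
      Finset.sum_le_sum fun ε _ => step5 ε
    rw [Finset.sum_add_distrib, hflip, Finset.sum_const, Finset.card_univ] at hsum
    have hcard : (Fintype.card (Fin n → Bool) : ℝ) = 2 ^ n := by
      simp [Fintype.card_fun]
    have h2 : (0:ℝ) < 2 ^ n := by positivity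
    have hkey : (2 ^ n : ℝ) * ∫ z, Dfun z ∂ρ ≤ 2 * S := by
      rw [nsmul_eq_mul] at hsum
      calc (2 ^ n : ℝ) * ∫ z, Dfun z ∂ρ
          = (Fintype.card (Fin n → Bool) : ℝ) * ∫ z, Dfun z ∂ρ := by rw [hcard]
        _ ≤ S + S := hsum
        _ = 2 * S := by ring
    calc ∫ z, Dfun z ∂ρ ≤ (2 * S) / 2 ^ n := by
          rw [le_div_iff₀ h2]; linarith [hkey]
      _ = 2 * ((1 / 2 ^ n : ℝ) * S) := by ring
  exact le_trans main1 (le_trans (le_of_eq main2) (le_trans (le_of_eq main3) hDS))
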